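/- Under an exponential dichotomy, any bounded continuous solution x of x(t) = T(t,τ)x(τ) + ∫_τ^t T(t,s)y(s) ds (for all t ≥ τ, y ∈ L^q) satisfies P(t)x(t) = ∫_{−∞}^t T(t,τ)P(τ)y(τ) dτ for every t ∈ ℝ. -/

import Mathlib

open MeasureTheory Set Filter
open scoped ENNReal

/-- The `L^p`-norm of a function `f : ℝ → X` with respect to a family of norms
`N t = ‖·‖_t` on `X` (ess sup when `p = ∞`). -/
noncomputable def famLpNorm {X : Type*} [NormedAddCommGroup X]
    (N : ℝ → X → ℝ) (p : ℝ≥0∞) (f : ℝ → X) : ℝ≥0∞ :=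
  if p = ∞ then essSup (fun t => ENNReal.ofReal (N t (f t))) volume
  else (∫⁻ t, ENNReal.ofReal (N t (f t)) ^ p.toReal) ^ (1 / p.toReal)

/-- Membership in `Y₁ = L^p ∩ C_b` with respect to the family of norms `N`. -/
def MemY1 {X : Type*} [NormedAddCommGroup X]
    (N : ℝ → X → ℝ) (p : ℝ≥0∞) (x : ℝ → X) : Prop :=
  Continuous x ∧ (∃ M, ∀ t, N t (x t) ≤ M) ∧ famLpNorm N p x < ∞

/-- Membership in `Y₂ = L^q` with respect to the family of norms `N`. -/
def MemY2 {X : Type*} [NormedAddCommGroup X]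
    (N : ℝ → X → ℝ) (q : ℝ≥0∞) (y : ℝ → X) : Prop :=
  AEStronglyMeasurable y volume ∧ famLpNorm N q y < ∞

/-- `x` solves the inhomogeneous integral equation
`x t = T t τ (x τ) + ∫_τ^t T t s (y s) ds` associated with the evolutionary family `T`. -/
def SolvesEq {X : Type*} [NormedAddCommGroup X] [NormedSpace ℝ X]
    (T : ℝ → ℝ → X →L[ℝ] X) (x y : ℝ → X) : Prop :=
  ∀ τ t, τ ≤ t → x t = T t τ (x τ) + ∫ s in Ioc τ t, T t s (y s)

/-- Exponential dichotomy of the evolutionary family `T` with respect to the family of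
norms `N`, with projections `P t`, inverse maps `S τ t` (the inverses of
`T t τ : Ker P τ → Ker P t`, applied after `Q t = I - P t`), and constants `a < 0 < b`,
`D > 0`. -/
def IsDichotomy {X : Type*} [NormedAddCommGroup X] [NormedSpace ℝ X]
    (T : ℝ → ℝ → X →L[ℝ] X) (N : ℝ → X → ℝ)
    (P : ℝ → X →L[ℝ] X) (S : ℝ → ℝ → X →L[ℝ] X) (a b D : ℝ) : Prop :=
  a < 0 ∧ 0 < b ∧ 0 < D ∧
  (∀ t, (P t).comp (P t) = P t) ∧
  (∀ τ t, τ ≤ t → (P t).comp (T t τ) = (T t τ).comp (P τ)) ∧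
  (∀ τ t, τ ≤ t → ∀ u, T t τ (S τ t (u - P t u)) = u - P t u) ∧
  (∀ τ t, τ ≤ t → ∀ u, S τ t (T t τ u - P t (T t τ u)) = u - P τ u) ∧
  (∀ τ t, τ ≤ t → ∀ u, P τ (S τ t (u - P t u)) = 0) ∧
  (∀ τ t u, τ ≤ t → N t (T t τ (P τ u)) ≤ D * Real.exp (a * (t - τ)) * N τ u) ∧
  (∀ τ t u, τ ≤ t → N τ (S τ t (u - P t u)) ≤ D * Real.exp (-b * (t - τ)) * N t u)

open scoped Topology

/-!
Apply `P t` to the integral equation and commute it past `T t τ` and the integral: for `τ ≤ t`,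
`P t (x t) = T t τ (P τ (x τ)) + ∫_τ^t T t s (P s (y s)) ds`. Since `x` is bounded in the norms
`N τ`, the first term is at most `D e^{a(t-τ)} sup_τ N τ (x τ)`, which tends to `0` as
`τ → -∞` because `a < 0`. The integrand is dominated by `D e^{a(t-s)} N s (y s)`, which is
integrable on `(-∞, t]` by Hölder's inequality, as `s ↦ e^{a(t-s)}` lies in every `L^r` there.
Letting `τ → -∞` gives the formula.
-/

lemma continuous_of_add_le_of_le_mul_norm {E : Type*} [SeminormedAddCommGroup E] {f : E → ℝ}
    (L : ℝ) (hadd : ∀ u v, f (u + v) ≤ f u + f v) (hle : ∀ u, f u ≤ L * ‖u‖) :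
    Continuous f := by
  refine (LipschitzWith.of_le_add_mul' L fun u v => ?_).continuous
  calc f u = f (v + (u - v)) := by rw [add_sub_cancel]
    _ ≤ f v + L * dist u v := by rw [dist_eq_norm]; linarith [hadd v (u - v), hle (u - v)]

theorem MeasureTheory.AEStronglyMeasurable.apply_of_continuous_of_stronglyMeasurable
    {α X E : Type*} [MeasurableSpace α] {μ : Measure α} [MetricSpace X]
    [TopologicalSpace E] [TopologicalSpace.PseudoMetrizableSpace E] {F : α → X → E}
    (hFc : ∀ a, Continuous (F a)) (hFm : ∀ u, StronglyMeasurable fun a => F a u)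
    {y : α → X} (hy : AEStronglyMeasurable y μ) :
    AEStronglyMeasurable (fun a => F a (y a)) μ := by
  obtain ⟨g, hg, hyg⟩ := hy
  borelize X
  have : TopologicalSpace.SeparableSpace (range g) := hg.isSeparable_range.separableSpace
  have : SecondCountableTopology (range g) := UniformSpace.secondCountable_of_separable _
  have hF : StronglyMeasurable (Function.uncurry fun (v : range g) a => F a v) :=
    stronglyMeasurable_uncurry_of_continuous_of_stronglyMeasurable
      (fun a => (hFc a).comp continuous_subtype_val) fun v => hFm v
  have hg' : Measurable fun a => (⟨g a, mem_range_self a⟩ : range g) :=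
    hg.measurable.subtype_mk
  refine (hF.comp_measurable (hg'.prodMk measurable_id)).aestronglyMeasurable.congr ?_
  filter_upwards [hyg] with a ha
  simp [ha]

lemma integrableOn_exp_mul_sub_Iic {a : ℝ} (ha : a < 0) (t : ℝ) :
    IntegrableOn (fun τ => Real.exp (a * (t - τ))) (Iic t) := by
  refine IntegrableOn.congr_fun ((integrableOn_exp_mul_Iic (neg_pos.2 ha) t).const_mul
    (Real.exp (a * t))) (fun τ _ => ?_) measurableSet_Iic
  rw [← Real.exp_add]
  ring_nf

lemma memLp_exp_mul_sub_Iic {a : ℝ} (ha : a < 0) (t : ℝ) (r : ℝ≥0∞) :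
    MemLp (fun τ => Real.exp (a * (t - τ))) r (volume.restrict (Iic t)) := by
  have hm : AEStronglyMeasurable (fun τ => Real.exp (a * (t - τ))) (volume.restrict (Iic t)) :=
    (by fun_prop : Continuous fun τ => Real.exp (a * (t - τ))).aestronglyMeasurable
  rcases eq_or_ne r 0 with rfl | hr0
  · exact memLp_zero_iff_aestronglyMeasurable.2 hm
  rcases eq_or_ne r ∞ with rfl | hrtop
  · refine memLp_top_of_bound hm 1 ?_
    filter_upwards [ae_restrict_mem measurableSet_Iic] with τ hτ
    rw [Real.norm_of_nonneg (Real.exp_pos _).le, Real.exp_le_one_iff]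
    exact mul_nonpos_of_nonpos_of_nonneg ha.le (sub_nonneg.2 hτ)
  rw [← integrable_norm_rpow_iff hm hr0 hrtop]
  refine (integrableOn_exp_mul_sub_Iic (mul_neg_of_neg_of_pos ha
    (ENNReal.toReal_pos hr0 hrtop)) t).congr_fun (fun τ _ => ?_) measurableSet_Iic
  rw [Real.norm_of_nonneg (Real.exp_pos _).le, ← Real.exp_mul]
  ring_nf

lemma famLpNorm_eq_eLpNorm {X : Type*} [NormedAddCommGroup X] {N : ℝ → X → ℝ}
    (hN : ∀ t u, 0 ≤ N t u) {p : ℝ≥0∞} (hp : p ≠ 0) (f : ℝ → X) :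
    famLpNorm N p f = eLpNorm (fun t => N t (f t)) p volume := by
  have hofReal : ∀ t, ENNReal.ofReal (N t (f t)) = ‖N t (f t)‖ₑ :=
    fun t => (Real.enorm_eq_ofReal (hN t (f t))).symm
  simp only [famLpNorm, hofReal]
  split_ifs with h
  · rw [h, eLpNorm_exponent_top, eLpNormEssSup]
  · rw [eLpNorm_eq_lintegral_rpow_enorm_toReal hp h]

lemma eq_integral_Iic_of_eq_add_integral_Ioc {E : Type*} [NormedAddCommGroup E]
    [NormedSpace ℝ E] {v : E} {f g : ℝ → E} {t : ℝ} (hf : Tendsto f atBot (𝓝 0))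
    (hg : IntegrableOn g (Iic t)) (h : ∀ τ ≤ t, v = f τ + ∫ s in Ioc τ t, g s) :
    v = ∫ s in Iic t, g s := by
  have hlim := hf.add (intervalIntegral_tendsto_integral_Iic t hg tendsto_id)
  rw [zero_add] at hlim
  refine tendsto_const_nhds_iff.1 (hlim.congr' ?_)
  filter_upwards [eventually_le_atBot t] with τ hτ
  rw [id, h τ hτ, intervalIntegral.integral_of_le hτ]

section EvolutionFamily

variable {X : Type*} [NormedAddCommGroup X] [NormedSpace ℝ X]
  {T : ℝ → ℝ → X →L[ℝ] X} {N : ℝ → X → ℝ} {P : ℝ → X →L[ℝ] X} {S : ℝ → ℝ → X →L[ℝ] X}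
  {a b D : ℝ} {y : ℝ → X} {t : ℝ}

lemma aestronglyMeasurable_evolution_apply_Iic
    (hContB : ∀ u, ContinuousOn (fun s => T t s u) (Iic t)) (hy : AEStronglyMeasurable y volume) :
    AEStronglyMeasurable (fun s => T t s (y s)) (volume.restrict (Iic t)) := by
  have hmin : ∀ u, StronglyMeasurable fun σ => T t (min σ t) u := fun u =>
    ((hContB u).comp_continuous (continuous_id.min continuous_const)
      fun σ => min_le_right σ t).stronglyMeasurable
  refine (hy.restrict.apply_of_continuous_of_stronglyMeasurable
    (fun σ => (T t (min σ t)).continuous) hmin).congr ?_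
  filter_upwards [ae_restrict_mem measurableSet_Iic] with σ hσ
  rw [min_eq_left hσ]

lemma integrableOn_evolution_apply_Ioc {K c : ℝ} {q : ℝ≥0∞} (hq : 1 ≤ q)
    (hN₁ : ∀ s u, ‖u‖ ≤ N s u)
    (hBd : ∀ s u, s ≤ t → N t (T t s u) ≤ K * Real.exp (c * (t - s)) * N s u)
    (hm : AEStronglyMeasurable (fun s => T t s (y s)) (volume.restrict (Iic t)))
    (hn : MemLp (fun s => N s (y s)) q volume) (τ : ℝ) :
    IntegrableOn (fun s => T t s (y s)) (Ioc τ t) := by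
  have hbound : IntegrableOn (fun s => K * Real.exp (c * (t - s)) * N s (y s)) (Icc τ t) :=
    ((hn.locallyIntegrable hq).integrableOn_isCompact isCompact_Icc).continuousOn_mul
      (by fun_prop) isCompact_Icc
  refine (hbound.mono_set Ioc_subset_Icc_self).mono' (hm.mono_set Ioc_subset_Iic_self) ?_
  filter_upwards [ae_restrict_mem measurableSet_Ioc] with s hs
  exact (hN₁ t _).trans (hBd s (y s) hs.2)

namespace IsDichotomy

variable (hdich : IsDichotomy T N P S a b D)
include hdich

lemma proj_evolution_apply {τ : ℝ} (hτ : τ ≤ t) (u : X) : P t (T t τ u) = T t τ (P τ u) := by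
  obtain ⟨-, -, -, -, hPT, -⟩ := hdich
  exact DFunLike.congr_fun (hPT τ t hτ) u

lemma proj_apply_eq_of_solvesEq [CompleteSpace X] {x : ℝ → X} (hsol : SolvesEq T x y) {τ : ℝ}
    (hτ : τ ≤ t) (hint : IntegrableOn (fun s => T t s (y s)) (Ioc τ t)) :
    P t (x t) = T t τ (P τ (x τ)) + ∫ s in Ioc τ t, T t s (P s (y s)) := by
  rw [hsol τ t hτ, map_add, hdich.proj_evolution_apply hτ, ← (P t).integral_comp_comm hint]
  congr 1
  exact setIntegral_congr_fun measurableSet_Ioc fun s hs => hdich.proj_evolution_apply hs.2 _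

lemma tendsto_evolution_proj_atBot (hN₁ : ∀ s u, ‖u‖ ≤ N s u) {x : ℝ → X}
    (hx : ∃ M, ∀ s, N s (x s) ≤ M) :
    Tendsto (fun τ => T t τ (P τ (x τ))) atBot (𝓝 0) := by
  obtain ⟨ha, -, hD, -, -, -, -, -, hstab, -⟩ := hdich
  obtain ⟨M, hM⟩ := hx
  have hexp : Tendsto (fun τ => D * Real.exp (a * (t - τ)) * M) atBot (𝓝 0) := by
    have hlin : Tendsto (fun τ : ℝ => a * (t - τ)) atBot atBot :=
      (tendsto_atTop_add_const_left _ t tendsto_neg_atBot_atTop).const_mul_atTop_of_neg ha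
    simpa using ((Real.tendsto_exp_atBot.comp hlin).const_mul D).mul_const M
  refine squeeze_zero_norm' ?_ hexp
  filter_upwards [eventually_le_atBot t] with τ hτ
  exact (hN₁ t _).trans ((hstab τ t (x τ) hτ).trans
    (mul_le_mul_of_nonneg_left (hM τ) (by positivity)))

lemma integrableOn_evolution_proj_Iic {q : ℝ≥0∞} (hq : 1 ≤ q) (hN₁ : ∀ s u, ‖u‖ ≤ N s u)
    (hn : MemLp (fun s => N s (y s)) q volume)
    (hm : AEStronglyMeasurable (fun τ => T t τ (P τ (y τ))) (volume.restrict (Iic t))) :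
    IntegrableOn (fun τ => T t τ (P τ (y τ))) (Iic t) := by
  obtain ⟨ha, -, -, -, -, -, -, -, hstab, -⟩ := hdich
  have := ENNReal.HolderConjugate.conjExponent hq
  have hw := (memLp_exp_mul_sub_Iic ha t q.conjExponent).const_mul D
  refine (hw.integrable_mul (hn.restrict _)).mono' hm ?_
  filter_upwards [ae_restrict_mem measurableSet_Iic] with τ hτ
  exact (hN₁ t _).trans (hstab τ t (y τ) hτ)

end IsDichotomy

end EvolutionFamily

theorem stable_part_of_bounded_solution_general
    {X : Type*} [NormedAddCommGroup X] [NormedSpace ℝ X] [CompleteSpace X]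
    (T : ℝ → ℝ → X →L[ℝ] X) (N : ℝ → X → ℝ) (C ε K c : ℝ)
    (hN₁ : ∀ t u, ‖u‖ ≤ N t u)
    (hN₂ : ∀ t (u : X), N t u ≤ C * Real.exp (ε * |t|) * ‖u‖)
    (hNadd : ∀ t (u v : X), N t (u + v) ≤ N t u + N t v)
    (hNmeas : ∀ u : X, Measurable fun t => N t u)
    (hContB : ∀ τ (u : X), ContinuousOn (fun s => T τ s u) (Iic τ))
    (hBd : ∀ τ t (u : X), τ ≤ t → N t (T t τ u) ≤ K * Real.exp (c * (t - τ)) * N τ u)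
    (P : ℝ → X →L[ℝ] X) (S : ℝ → ℝ → X →L[ℝ] X) (a b D : ℝ)
    (hdich : IsDichotomy T N P S a b D)
    (q : ℝ≥0∞) (hq : 1 ≤ q)
    (y : ℝ → X) (hy : MemY2 N q y)
    (hmeas₁ : ∀ t, AEStronglyMeasurable (fun τ => T t τ (P τ (y τ))) volume)
    (x : ℝ → X) (hxbdd : ∃ M, ∀ t, N t (x t) ≤ M)
    (hsol : SolvesEq T x y) :
    ∀ t : ℝ, P t (x t) = ∫ τ in Iic t, T t τ (P τ (y τ)) := by
  have hN₀ : ∀ t u, 0 ≤ N t u := fun t u => (norm_nonneg u).trans (hN₁ t u)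
  have hn : MemLp (fun τ => N τ (y τ)) q volume :=
    ⟨hy.1.apply_of_continuous_of_stronglyMeasurable
        (fun t => continuous_of_add_le_of_le_mul_norm _ (hNadd t) (hN₂ t))
        fun u => (hNmeas u).stronglyMeasurable,
      famLpNorm_eq_eLpNorm hN₀ (zero_lt_one.trans_le hq).ne' y ▸ hy.2⟩
  intro t
  refine eq_integral_Iic_of_eq_add_integral_Ioc
    (hdich.tendsto_evolution_proj_atBot (t := t) hN₁ hxbdd)
    (hdich.integrableOn_evolution_proj_Iic hq hN₁ hn (hmeas₁ t).restrict) fun τ hτ => ?_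
  exact hdich.proj_apply_eq_of_solvesEq hsol hτ <| integrableOn_evolution_apply_Ioc hq hN₁
    (fun s u => hBd s t u) (aestronglyMeasurable_evolution_apply_Iic (hContB t) hy.1) hn τ

/-- Under an exponential dichotomy, any bounded continuous solution `x`
of the integral equation with inhomogeneity `y ∈ L^q` satisfies
`P t (x t) = ∫_{-∞}^t T t τ (P τ (y τ)) dτ` for every `t`. -/
theorem stable_part_of_bounded_solution
    {X : Type*} [NormedAddCommGroup X] [NormedSpace ℝ X] [CompleteSpace X]
    (T : ℝ → ℝ → X →L[ℝ] X) (N : ℝ → X → ℝ) (C ε K c : ℝ)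
    (hN₁ : ∀ t u, ‖u‖ ≤ N t u)
    (hN₂ : ∀ t (u : X), N t u ≤ C * Real.exp (ε * |t|) * ‖u‖)
    (hNadd : ∀ t (u v : X), N t (u + v) ≤ N t u + N t v)
    (hNsmul : ∀ t (r : ℝ) (u : X), N t (r • u) = |r| * N t u)
    (hNmeas : ∀ u : X, Measurable fun t => N t u)
    (hId : ∀ t, T t t = ContinuousLinearMap.id ℝ X)
    (hCoc : ∀ τ s t, τ ≤ s → s ≤ t → ∀ u, T t s (T s τ u) = T t τ u)
    (hCont : ∀ τ (u : X), ContinuousOn (fun t => T t τ u) (Ici τ))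
    (hContB : ∀ τ (u : X), ContinuousOn (fun s => T τ s u) (Iic τ))
    (hBd : ∀ τ t (u : X), τ ≤ t → N t (T t τ u) ≤ K * Real.exp (c * (t - τ)) * N τ u)
    (P : ℝ → X →L[ℝ] X) (S : ℝ → ℝ → X →L[ℝ] X) (a b D : ℝ)
    (hdich : IsDichotomy T N P S a b D)
    (q : ℝ≥0∞) (hq : 1 ≤ q)
    (y : ℝ → X) (hy : MemY2 N q y)
    (hmeas₁ : ∀ t, AEStronglyMeasurable (fun τ => T t τ (P τ (y τ))) volume)
    (x : ℝ → X) (hxcont : Continuous x) (hxbdd : ∃ M, ∀ t, N t (x t) ≤ M)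
    (hsol : SolvesEq T x y) :
    ∀ t : ℝ, P t (x t) = ∫ τ in Iic t, T t τ (P τ (y τ)) :=
  stable_part_of_bounded_solution_general T N C ε K c hN₁ hN₂ hNadd hNmeas hContB hBd P S a b D
    hdich q hq y hy hmeas₁ x hxbdd hsol
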